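/- Adequacy of evidence as runtime sensitivity monitor: if a well-typed closed GSCheck expression e (obtained by elaboration of a GS expression) reduces in zero or more steps to a value ⟨T₁, T₂⟩ u :: T, then T₂ ⊑ T, i.e., the right-hand component of the value's evidence is at least as precise as the ascribed type; in particular the monitored sensitivity environment (the lower bounds of the sensitivity environment of T₂) is contained interval-wise in the sensitivity environment of T. -/

import Mathlib

open Classical

noncomputable section

namespace GS

/-! ## Base types, constants, primitive operations -/

/-- Base types. -/
inductive BaseTy where
  | real
  | bool
deriving DecidableEq

/-- Constants (literal values of base types). -/
inductive Const where
  | r : ℝ → Const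
  | b : Bool → Const

/-- Primitive (binary) operations. -/
inductive Op where
  | add
  | mul
  | le

/-! ## Gradual sensitivities: sensitivity intervals -/

/-- A gradual sensitivity: a valid interval `[lo,hi]` with `0 ≤ lo ≤ hi ≤ ∞`
over the extended nonnegative reals. The unknown sensitivity `?` is `[0,∞]`
and a fully precise sensitivity `s` is `[s,s]`. -/
structure SI where
  lo : ENNReal
  hi : ENNReal
  isle : lo ≤ hi

/-- Interval addition. -/
def SI.add (a b : SI) : SI := ⟨a.lo + b.lo, a.hi + b.hi, add_le_add a.isle b.isle⟩

/-- Interval multiplication. -/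
def SI.mul (a b : SI) : SI := ⟨a.lo * b.lo, a.hi * b.hi, mul_le_mul' a.isle b.isle⟩

/-- Interval join. -/
def SI.join (a b : SI) : SI := ⟨a.lo ⊔ b.lo, a.hi ⊔ b.hi, sup_le_sup a.isle b.isle⟩

/-- Precision on gradual sensitivities: interval inclusion. -/
def SI.prec (a b : SI) : Prop := b.lo ≤ a.lo ∧ a.hi ≤ b.hi

/-- Consistent sensitivity ordering: `[s₁,s₂] ⪅ [s₃,s₄]` iff `s₁ ≤ s₄`. -/
def SI.cle (a b : SI) : Prop := a.lo ≤ b.hi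

/-- A gradual sensitivity is bounded if it does not contain ∞. -/
def SI.bounded (a : SI) : Prop := a.hi ≠ ⊤

/-- A gradual sensitivity is static (fully precise) if it is a singleton. -/
def SI.static (a : SI) : Prop := a.lo = a.hi

/-- The zero sensitivity. -/
def SI.zero : SI := ⟨0, 0, le_rfl⟩

/-- The infinite sensitivity. -/
def SI.inf : SI := ⟨⊤, ⊤, le_rfl⟩

/-- The unknown sensitivity `? = [0,∞]`. -/
def SI.unknown : SI := ⟨0, ⊤, le_top⟩

/-! ## Gradual sensitivity environments -/

/-- A gradual sensitivity environment: a map from distance variables to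
gradual sensitivities. -/
abbrev GEnv := String → SI

/-- Pointwise addition of sensitivity environments. -/
def addE (S1 S2 : GEnv) : GEnv := fun x => (S1 x).add (S2 x)

/-- Scaling of a sensitivity environment by a gradual sensitivity. -/
def scaleE (g : SI) (S : GEnv) : GEnv := fun x => g.mul (S x)

/-- The empty sensitivity environment ∅. -/
def zeroE : GEnv := fun _ => SI.zero

/-- Pointwise precision of sensitivity environments. -/
def precE (S1 S2 : GEnv) : Prop := ∀ x, (S1 x).prec (S2 x)

/-- A sensitivity environment is bounded if no interval contains ∞. -/
def boundedE (S : GEnv) : Prop := ∀ x, (S x).bounded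

/-- Substitution [Sr/r]S of a sensitivity environment for a distance
variable in a sensitivity environment. -/
def substDVE (r : String) (Sr : GEnv) (S : GEnv) : GEnv :=
  fun y => (if y = r then SI.zero else S y).add ((S r).mul (Sr y))

/-! ## GS types -/

/-- GS types g; `arrow g₁ S₁ g₂ S₂` is the function type g₁^{S₁} → g₂^{S₂};
`all r g S` is the distance abstraction type ∀r. g^{S}. -/
inductive GTy where
  | base : BaseTy → GTy
  | arrow : GTy → GEnv → GTy → GEnv → GTy
  | all : String → GTy → GEnv → GTy

/-- Sensitivity types T = g^Σ. -/
abbrev CTy := GTy × GEnv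

/-- Substitution [Sr/r] of a sensitivity environment for a distance variable
in a type (recursively in all nested sensitivity environments, respecting
the ∀-binder). -/
def substT (r : String) (Sr : GEnv) : GTy → GTy
  | .base B => .base B
  | .arrow g1 S1 g2 S2 =>
      .arrow (substT r Sr g1) (substDVE r Sr S1) (substT r Sr g2) (substDVE r Sr S2)
  | .all r' g S =>
      if r' = r then .all r' g S
      else .all r' (substT r Sr g) (substDVE r Sr S)

/-- Size of a type (used for termination of the logical relations). -/
def GTy.size : GTy → ℕ
  | .base _ => 1
  | .arrow g1 _ g2 _ => g1.size + g2.size + 1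
  | .all _ g _ => g.size + 1

theorem size_substT (r : String) (Sr : GEnv) (g : GTy) :
    (substT r Sr g).size = g.size := by
  induction g with
  | base B => rfl
  | arrow g1 S1 g2 S2 ih1 ih2 => simp [substT, GTy.size, ih1, ih2]
  | all r' g S ih => by_cases h : r' = r <;> simp [substT, h, GTy.size, ih]

/-- Precision on GS types (covariant everywhere). -/
inductive TyPrec : GTy → GTy → Prop
  | base : TyPrec (.base B) (.base B)
  | arrow : TyPrec g1 g1' → precE S1 S1' → TyPrec g2 g2' → precE S2 S2' →
      TyPrec (.arrow g1 S1 g2 S2) (.arrow g1' S1' g2' S2')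
  | all : TyPrec g g' → precE S S' →
      TyPrec (.all r g S) (.all r g' S')

/-- Precision on sensitivity types. -/
def CTyPrec (T T' : CTy) : Prop := TyPrec T.1 T'.1 ∧ precE T.2 T'.2

/-! ## Evidence, interior and consistent transitivity -/

/-- An evidence for a consistent subtyping judgment: a pair of sensitivity
types. -/
abbrev Ev := CTy × CTy

/-- Evidence precision ⊑² (componentwise precision). -/
def EvPrec (ε ε' : Ev) : Prop := CTyPrec ε.1 ε'.1 ∧ CTyPrec ε.2 ε'.2

/-- Interior of two sensitivity environments (pointwise interior of the
consistent sensitivity ordering). -/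
def interE (S1 S2 : GEnv) : Option (GEnv × GEnv) :=
  if h : ∀ x, (S1 x).lo ≤ (S2 x).hi then
    some (fun x => ⟨(S1 x).lo, (S1 x).hi ⊓ (S2 x).hi, le_inf (S1 x).isle (h x)⟩,
          fun x => ⟨(S1 x).lo ⊔ (S2 x).lo, (S2 x).hi, sup_le (h x) (S2 x).isle⟩)
  else none

/-- Interior of two GS types (evidence for a consistent subtyping judgment,
contravariant in function domains). -/
def interT : GTy → GTy → Option (GTy × GTy)
  | .base B1, .base B2 => if B1 = B2 then some (.base B1, .base B2) else none
  | .arrow a1 sa1 b1 sb1, .arrow a2 sa2 b2 sb2 => do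
      let (a2', a1') ← interT a2 a1
      let (sa2', sa1') ← interE sa2 sa1
      let (b1', b2') ← interT b1 b2
      let (sb1', sb2') ← interE sb1 sb2
      pure (.arrow a1' sa1' b1' sb1', .arrow a2' sa2' b2' sb2')
  | .all r1 g1 s1, .all r2 g2 s2 =>
      if r1 = r2 then do
        let (g1', g2') ← interT g1 g2
        let (s1', s2') ← interE s1 s2
        pure (.all r1 g1' s1', .all r2 g2' s2')
      else none
  | _, _ => none
termination_by t1 t2 => t1.size + t2.size
decreasing_by all_goals simp [GTy.size] <;> omega

/-- Interior of two sensitivity types: the initial evidence for their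
consistent subtyping judgment. -/
def interC (T1 T2 : CTy) : Option Ev := do
  let (g1, g2) ← interT T1.1 T2.1
  let (s1, s2) ← interE T1.2 T2.2
  pure ((g1, s1), (g2, s2))

/-- Consistent transitivity on (pointwise) sensitivity environments:
combines evidences ⟨s1,s2⟩ and ⟨s3,s4⟩. -/
def ctrE (s1 s2 s3 s4 : GEnv) : Option (GEnv × GEnv) :=
  if h : ∀ x, (s1 x).lo ≤ (s1 x).hi ⊓ (s2 x).hi ⊓ (s3 x).hi ∧
              (s2 x).lo ⊔ (s3 x).lo ⊔ (s4 x).lo ≤ (s4 x).hi then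
    some (fun x => ⟨(s1 x).lo, (s1 x).hi ⊓ (s2 x).hi ⊓ (s3 x).hi, (h x).1⟩,
          fun x => ⟨(s2 x).lo ⊔ (s3 x).lo ⊔ (s4 x).lo, (s4 x).hi, (h x).2⟩)
  else none

/-- Consistent transitivity on GS types: combines evidences ⟨t1,t2⟩ and
⟨t3,t4⟩ (contravariant in function domains). -/
def ctrT : GTy → GTy → GTy → GTy → Option (GTy × GTy)
  | .base B1, .base B2, .base B3, .base B4 =>
      if B1 = B2 ∧ B2 = B3 ∧ B3 = B4 then some (.base B1, .base B4) else none
  | .arrow a1 sa1 b1 sb1, .arrow a2 sa2 b2 sb2,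
    .arrow a3 sa3 b3 sb3, .arrow a4 sa4 b4 sb4 => do
      let (a4', a1') ← ctrT a4 a3 a2 a1
      let (sa4', sa1') ← ctrE sa4 sa3 sa2 sa1
      let (b1', b4') ← ctrT b1 b2 b3 b4
      let (sb1', sb4') ← ctrE sb1 sb2 sb3 sb4
      pure (.arrow a1' sa1' b1' sb1', .arrow a4' sa4' b4' sb4')
  | .all r1 g1 s1, .all r2 g2 s2, .all r3 g3 s3, .all r4 g4 s4 =>
      if r1 = r2 ∧ r2 = r3 ∧ r3 = r4 then do
        let (g1', g4') ← ctrT g1 g2 g3 g4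
        let (s1', s4') ← ctrE s1 s2 s3 s4
        pure (.all r1 g1' s1', .all r4 g4' s4')
      else none
  | _, _, _, _ => none
termination_by t1 t2 t3 t4 => t1.size + t2.size + t3.size + t4.size
decreasing_by all_goals simp [GTy.size] <;> omega

/-- Consistent transitivity on evidences: ε₁ ∘ ε₂, undefined when transitivity
is refuted. -/
def ctrC (e1 e2 : Ev) : Option Ev := do
  let (g1, g4) ← ctrT e1.1.1 e1.2.1 e2.1.1 e2.2.1
  let (s1, s4) ← ctrE e1.1.2 e1.2.2 e2.1.2 e2.2.2
  pure ((g1, s1), (g4, s4))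

/-! ## GSCheck: the internal evidence language -/

/-- GSCheck expressions: ascriptions `ascr ε e T` carry an evidence ε and an
ascribed sensitivity type T; `err` is the runtime error term. -/
inductive CExpr where
  | const : Const → CExpr
  | op : Op → CExpr → CExpr → CExpr
  | var : String → CExpr
  | lam : String → CTy → CExpr → CExpr
  | app : CExpr → CExpr → CExpr
  | tlam : String → CExpr → CExpr
  | tapp : CExpr → GEnv → CExpr
  | ascr : Ev → CExpr → CTy → CExpr
  | err : CExpr

mutual
/-- Simple values u ::= c | λ(x:T).e | Λr.v. -/
inductive Simple : CExpr → Prop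
  | const : Simple (.const c)
  | lam : Simple (.lam x T e)
  | tlam : IsVal v → Simple (.tlam r v)
/-- Values v ::= ε u :: T. -/
inductive IsVal : CExpr → Prop
  | mk : Simple u → IsVal (.ascr ε u T)
end

/-- Term substitution. -/
def csubst (x : String) (v : CExpr) : CExpr → CExpr
  | .const c => .const c
  | .op o a b => .op o (csubst x v a) (csubst x v b)
  | .var y => if y = x then v else .var y
  | .lam y T e => if y = x then .lam y T e else .lam y T (csubst x v e)
  | .app a b => .app (csubst x v a) (csubst x v b)
  | .tlam r e => .tlam r (csubst x v e)
  | .tapp e S => .tapp (csubst x v e) S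
  | .ascr ε e T => .ascr ε (csubst x v e) T
  | .err => .err

/-- Substitution of a distance variable in a sensitivity type. -/
def substCTy (r : String) (Sr : GEnv) (T : CTy) : CTy :=
  (substT r Sr T.1, substDVE r Sr T.2)

/-- Substitution of a distance variable in an evidence. -/
def substEv (r : String) (Sr : GEnv) (ε : Ev) : Ev :=
  (substCTy r Sr ε.1, substCTy r Sr ε.2)

/-- Substitution of a distance variable in a GSCheck expression. -/
def dsubst (r : String) (Sr : GEnv) : CExpr → CExpr
  | .const c => .const c
  | .op o a b => .op o (dsubst r Sr a) (dsubst r Sr b)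
  | .var y => .var y
  | .lam y T e => .lam y (substCTy r Sr T) (dsubst r Sr e)
  | .app a b => .app (dsubst r Sr a) (dsubst r Sr b)
  | .tlam r' e => if r' = r then .tlam r' e else .tlam r' (dsubst r Sr e)
  | .tapp e S => .tapp (dsubst r Sr e) (substDVE r Sr S)
  | .ascr ε e T => .ascr (substEv r Sr ε) (dsubst r Sr e) (substCTy r Sr T)
  | .err => .err

/-- Denotation of the primitive operations. -/
def opDenote : Op → Const → Const → Option Const
  | .add, .r a, .r b => some (.r (a + b))
  | .mul, .r a, .r b => some (.r (a * b))
  | .le, .r a, .r b => some (.b (if a ≤ b then true else false))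
  | _, _, _ => none

/-- Sensitivity typing of the primitive operations: addition adds the
sensitivity environments; multiplication and comparison scale by ∞. -/
def opCTy : Op → CTy → CTy → Option CTy
  | .add, (.base .real, S1), (.base .real, S2) => some (.base .real, addE S1 S2)
  | .mul, (.base .real, S1), (.base .real, S2) =>
      some (.base .real, scaleE SI.inf (addE S1 S2))
  | .le, (.base .real, S1), (.base .real, S2) =>
      some (.base .bool, scaleE SI.inf (addE S1 S2))
  | _, _, _ => none

/-- Lifting of operation typing to evidences. -/
def opEv (o : Op) (ε1 ε2 : Ev) : Option Ev := do
  let a ← opCTy o ε1.1 ε2.1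
  let b ← opCTy o ε1.2 ε2.2
  pure (a, b)

/-- Domain of a function sensitivity type. -/
def domC : CTy → Option CTy
  | (.arrow g1 S1 _ _, _) => some (g1, S1)
  | _ => none

/-- Codomain of a function sensitivity type (adding the function's own
top-level sensitivity environment). -/
def codC : CTy → Option CTy
  | (.arrow _ _ g2 S2, S) => some (g2, addE S2 S)
  | _ => none

/-- Instantiation of a distance-abstraction sensitivity type. -/
def instC (T : CTy) (Sr : GEnv) : Option CTy :=
  match T with
  | (.all r g Sg, S) => some (substT r Sr g, addE (substDVE r Sr Sg) S)
  | _ => none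

/-- Inversion of an evidence for the domain (contravariant). -/
def domEv (ε : Ev) : Option Ev := do
  let d2 ← domC ε.2
  let d1 ← domC ε.1
  pure (d2, d1)

/-- Inversion of an evidence for the codomain. -/
def codEv (ε : Ev) : Option Ev := do
  let c1 ← codC ε.1
  let c2 ← codC ε.2
  pure (c1, c2)

/-- Inversion of an evidence for instantiation. -/
def instEv (ε : Ev) (Sr : GEnv) : Option Ev := do
  let i1 ← instC ε.1 Sr
  let i2 ← instC ε.2 Sr
  pure (i1, i2)

/-- Reduction of GSCheck (the notions of reduction of Figure 6 together with
the congruence closure under evaluation contexts and error propagation). -/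
inductive Step : CExpr → CExpr → Prop
  | op : opDenote o c1 c2 = some c → opEv o ε1 ε2 = some ε → opCTy o T1 T2 = some T →
      Step (.op o (.ascr ε1 (.const c1) T1) (.ascr ε2 (.const c2) T2))
           (.ascr ε (.const c) T)
  | appOk : Simple u → domEv ε = some εd → ctrC ε1 εd = some ε' →
      codEv ε = some εc → codC T = some Tc →
      Step (.app (.ascr ε (.lam x T1' eb) T) (.ascr ε1 u T1))
           (.ascr εc (csubst x (.ascr ε' u T1') eb) Tc)
  | appErr : Simple u → domEv ε = some εd → ctrC ε1 εd = none →
      Step (.app (.ascr ε (.lam x T1' eb) T) (.ascr ε1 u T1)) .err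
  | inst : IsVal v → instEv ε Sr = some ε' → instC T Sr = some T' →
      Step (.tapp (.ascr ε (.tlam r v) T) Sr) (.ascr ε' (dsubst r Sr v) T')
  | ascrOk : Simple u → ctrC ε' ε = some ε'' →
      Step (.ascr ε (.ascr ε' u T') T) (.ascr ε'' u T)
  | ascrErr : Simple u → ctrC ε' ε = none →
      Step (.ascr ε (.ascr ε' u T') T) .err
  -- congruence (evaluation contexts)
  | opL : Step e1 e1' → Step (.op o e1 e2) (.op o e1' e2)
  | opR : IsVal v → Step e2 e2' → Step (.op o v e2) (.op o v e2')
  | appL : Step e1 e1' → Step (.app e1 e2) (.app e1' e2)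
  | appR : IsVal v → Step e2 e2' → Step (.app v e2) (.app v e2')
  | tappC : Step e e' → Step (.tapp e S) (.tapp e' S)
  | tlamC : Step e e' → Step (.tlam r e) (.tlam r e')
  | ascrC : Step e e' → Step (.ascr ε e T) (.ascr ε e' T)
  -- error propagation
  | opLErr : Step (.op o .err e2) .err
  | opRErr : IsVal v → Step (.op o v .err) .err
  | appLErr : Step (.app .err e2) .err
  | appRErr : IsVal v → Step (.app v .err) .err
  | tappErr : Step (.tapp .err S) .err
  | tlamErr : Step (.tlam r .err) .err
  | ascrErrP : Step (.ascr ε .err T) .err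

/-- Zero or more reduction steps. -/
def Steps : CExpr → CExpr → Prop := Relation.ReflTransGen Step

/-- e ⇓ v : e reduces to the value v. -/
def EvalsTo (e v : CExpr) : Prop := Steps e v ∧ IsVal v

/-- e ⇓ error. -/
def EvalsErr (e : CExpr) : Prop := Steps e .err

/-- Applying a substitution γ (a value environment) to a GSCheck expression. -/
def cmsubst (γ : String → CExpr) : CExpr → CExpr
  | .const c => .const c
  | .op o a b => .op o (cmsubst γ a) (cmsubst γ b)
  | .var y => γ y
  | .lam y T e => .lam y T (cmsubst (Function.update γ y (.var y)) e)
  | .app a b => .app (cmsubst γ a) (cmsubst γ b)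
  | .tlam r e => .tlam r (cmsubst γ e)
  | .tapp e S => .tapp (cmsubst γ e) S
  | .ascr ε e T => .ascr ε (cmsubst γ e) T
  | .err => .err

/-! ## Monitors, distances, canonical forms -/

/-- The monitor of a value: its evidence. -/
def monOf : CExpr → Option Ev
  | .ascr ε _ _ => some ε
  | _ => none

/-- The monitored sensitivity of a value: the static environment of lower
bounds of the sensitivity environment of the right-hand component of its
evidence. -/
def msOf : CExpr → String → ENNReal
  | .ascr (_, (_, S')) _ _ => fun r => (S' r).lo
  | _ => fun _ => 0

/-- Equi-precise monitors (each is more precise than the other). -/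
def EquiEv (v1 v2 : CExpr) : Prop :=
  ∃ ε1 ε2, monOf v1 = some ε1 ∧ monOf v2 = some ε2 ∧ EvPrec ε1 ε2 ∧ EvPrec ε2 ε1

/-- Canonical forms of a base type. -/
def CanonC (B : BaseTy) (v : CExpr) : Prop :=
  match B, v with
  | .real, .ascr _ (.const (.r _)) _ => True
  | .bool, .ascr _ (.const (.b _)) _ => True
  | _, _ => False

/-- The metric d_B on canonical forms of base types. -/
def dBC (B : BaseTy) (v1 v2 : CExpr) : ENNReal :=
  match B, v1, v2 with
  | .real, .ascr _ (.const (.r a)) _, .ascr _ (.const (.r b)) _ =>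
      ENNReal.ofReal |a - b|
  | .bool, .ascr _ (.const (.b a)) _, .ascr _ (.const (.b b)) _ =>
      if a = b then 0 else ⊤
  | _, _, _ => ⊤

/-- Distance environments: maps from distance variables to distances. -/
abbrev DEnv := String → ENNReal

/-- A distance environment is bounded if it avoids ∞. -/
def boundedD (dl : DEnv) : Prop := ∀ r, dl r ≠ ⊤

/-- Σ·δ for a static (fully precise) sensitivity environment Σ. -/
def dot (S : String → ENNReal) (dl : DEnv) : ENNReal := ∑' r, S r * dl r

/-- A static environment Σ' is (pointwise) within the gradual environment Σ,
i.e. Σ' is a static environment more precise than Σ. -/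
def staticPrec (S' : String → ENNReal) (S : GEnv) : Prop :=
  ∀ r, (S r).lo ≤ S' r ∧ S' r ≤ (S r).hi

/-! ## Logical relations (Figure 4): termination-insensitive -/

/-- Value logical relation (v₁,v₂) ∈ V_δ⟦g^Σ⟧ (Figure 4); the computation
relation E is inlined in the arrow and ∀ cases. -/
def Vrel (dl : DEnv) : GTy → GEnv → CExpr → CExpr → Prop
  | .base B, _, v1, v2 =>
      CanonC B v1 ∧ CanonC B v2 ∧
      dBC B v1 v2 ≤ dot (fun r => msOf v1 r ⊔ msOf v2 r) dl
  | .arrow g1 S1 g2 S2, S, v1, v2 =>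
      IsVal v1 ∧ IsVal v2 ∧
      ∀ v1' v2', Vrel dl g1 S1 v1' v2' →
        ∀ w1 w2, EvalsTo (.app v1 v1') w1 → EvalsTo (.app v2 v2') w2 →
          Vrel dl g2 (addE S2 S) w1 w2
  | .all r g Sg, S, v1, v2 =>
      IsVal v1 ∧ IsVal v2 ∧
      ∀ Sr, ∀ w1 w2, EvalsTo (.tapp v1 Sr) w1 → EvalsTo (.tapp v2 Sr) w2 →
        Vrel dl (substT r Sr g) (addE (substDVE r Sr Sg) S) w1 w2
termination_by g _ _ _ => g.size
decreasing_by all_goals simp [GTy.size, size_substT] <;> omega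

/-- Computation logical relation (e₁,e₂) ∈ E_δ⟦g^Σ⟧. -/
def Erel (dl : DEnv) (g : GTy) (S : GEnv) (e1 e2 : CExpr) : Prop :=
  ∀ v1 v2, EvalsTo e1 v1 → EvalsTo e2 v2 → Vrel dl g S v1 v2

/-- Type environments. -/
abbrev GTEnv := String → Option CTy

/-- Related substitutions (γ₁,γ₂) ∈ G_δ⟦Γ⟧. -/
def Grel (dl : DEnv) (Γ : GTEnv) (γ1 γ2 : String → CExpr) : Prop :=
  ∀ x T, Γ x = some T → Vrel dl T.1 T.2 (γ1 x) (γ2 x)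

/-- Semantic gradual sensitivity typing Γ ⊨ e : T. -/
def SemGTy (Γ : GTEnv) (e : CExpr) (T : CTy) : Prop :=
  ∀ dl γ1 γ2, Grel dl Γ γ1 γ2 → Erel dl T.1 T.2 (cmsubst γ1 e) (cmsubst γ2 e)

/-! ## Logical relations (Figure 5): termination-sensitive -/

/-- Termination-sensitive value logical relation (v₁,v₂) ∈ Vᵗˢ_δ⟦g^Σ⟧
(Figure 5); the computation relation Eᵗˢ is inlined in the arrow and ∀
cases. -/
def VrelTS (dl : DEnv) : GTy → GEnv → CExpr → CExpr → Prop
  | .base B, _, v1, v2 =>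
      EquiEv v1 v2 ∧ CanonC B v1 ∧ CanonC B v2 ∧
      dBC B v1 v2 ≤ dot (fun r => msOf v1 r ⊔ msOf v2 r) dl
  | .arrow g1 S1 g2 S2, S, v1, v2 =>
      EquiEv v1 v2 ∧ IsVal v1 ∧ IsVal v2 ∧
      ∀ v1' v2', VrelTS dl g1 S1 v1' v2' →
        ∀ w1, EvalsTo (.app v1 v1') w1 →
          ∃ w2, EvalsTo (.app v2 v2') w2 ∧ VrelTS dl g2 (addE S2 S) w1 w2
  | .all r g Sg, S, v1, v2 =>
      EquiEv v1 v2 ∧ IsVal v1 ∧ IsVal v2 ∧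
      ∀ Sr, boundedE Sr →
        ∀ w1, EvalsTo (.tapp v1 Sr) w1 →
          ∃ w2, EvalsTo (.tapp v2 Sr) w2 ∧
            VrelTS dl (substT r Sr g) (addE (substDVE r Sr Sg) S) w1 w2
termination_by g _ _ _ => g.size
decreasing_by all_goals simp [GTy.size, size_substT] <;> omega

/-- Termination-sensitive computation logical relation. -/
def ErelTS (dl : DEnv) (g : GTy) (S : GEnv) (e1 e2 : CExpr) : Prop :=
  ∀ v1, EvalsTo e1 v1 → ∃ v2, EvalsTo e2 v2 ∧ VrelTS dl g S v1 v2

/-- Termination-sensitive related substitutions (γ₁,γ₂) ∈ Gᵗˢ_δ⟦Γ⟧ (requires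
a bounded distance environment). -/
def GrelTS (dl : DEnv) (Γ : GTEnv) (γ1 γ2 : String → CExpr) : Prop :=
  boundedD dl ∧ ∀ x T, Γ x = some T → VrelTS dl T.1 T.2 (γ1 x) (γ2 x)

/-- Termination-sensitive semantic gradual sensitivity typing Γ ⊨ᵗˢ e : g^Σ
(requires the top-level sensitivity environment to be bounded). -/
def SemGTyTS (Γ : GTEnv) (e : CExpr) (T : CTy) : Prop :=
  boundedE T.2 ∧
  ∀ dl γ1 γ2, GrelTS dl Γ γ1 γ2 → ErelTS dl T.1 T.2 (cmsubst γ1 e) (cmsubst γ2 e)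

/-! ## Gradual metric preservation -/

/-- δ-proximity of two substitutions for a base-type environment Γ:
values are canonical forms at bounded distance as measured by the join of
their monitored sensitivities. -/
def Proximate (dl : DEnv) (Γ : GTEnv) (γ1 γ2 : String → CExpr) : Prop :=
  ∀ x B S, Γ x = some (.base B, S) →
    CanonC B (γ1 x) ∧ CanonC B (γ2 x) ∧
    dBC B (γ1 x) (γ2 x) ≤ dot (fun r => msOf (γ1 x) r ⊔ msOf (γ2 x) r) dl

/-- Termination-sensitive δ-proximity: additionally δ is bounded and
corresponding values carry equi-precise evidences. -/
def ProximateTS (dl : DEnv) (Γ : GTEnv) (γ1 γ2 : String → CExpr) : Prop :=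
  boundedD dl ∧
  ∀ x B S, Γ x = some (.base B, S) →
    EquiEv (γ1 x) (γ2 x) ∧ CanonC B (γ1 x) ∧ CanonC B (γ2 x) ∧
    dBC B (γ1 x) (γ2 x) ≤ dot (fun r => msOf (γ1 x) r ⊔ msOf (γ2 x) r) dl

/-- Gradual metric preservation GMP(Γ, e, B, Σ). -/
def GMP (Γ : GTEnv) (e : CExpr) (B : BaseTy) (S : GEnv) : Prop :=
  ∀ dl γ1 γ2, Proximate dl Γ γ1 γ2 →
    ∀ v1 v2, EvalsTo (cmsubst γ1 e) v1 → EvalsTo (cmsubst γ2 e) v2 →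
      ∃ S' : String → ENNReal, staticPrec S' S ∧ dBC B v1 v2 ≤ dot S' dl

/-- Termination-sensitive gradual metric preservation GMPᵗˢ(Γ, e, B, Σ). -/
def GMPts (Γ : GTEnv) (e : CExpr) (B : BaseTy) (S : GEnv) : Prop :=
  ∀ dl γ1 γ2, ProximateTS dl Γ γ1 γ2 →
    ∀ v1, EvalsTo (cmsubst γ1 e) v1 →
      ∃ v2, EvalsTo (cmsubst γ2 e) v2 ∧
        ∃ S' : String → ENNReal, staticPrec S' S ∧ dBC B v1 v2 ≤ dot S' dl

/-! ## The source language GS and type-directed elaboration (Figure 7) -/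

/-- GS source expressions. -/
inductive GExpr where
  | const : Const → GExpr
  | op : Op → GExpr → GExpr → GExpr
  | var : String → GExpr
  | lam : String → CTy → GExpr → GExpr
  | app : GExpr → GExpr → GExpr
  | tlam : String → GExpr → GExpr
  | tapp : GExpr → GEnv → GExpr
  | ascr : GExpr → CTy → GExpr

/-- The base type of a constant. -/
def constBTy : Const → BaseTy
  | .r _ => .real
  | .b _ => .bool

/-- Type-directed elaboration Γ ⊢ e ⇝ e' : T from GS to GSCheck (Figure 7);
it doubles as the syntactic type system of GS. -/
inductive Elab : GTEnv → GExpr → CExpr → CTy → Prop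
  | const : interC (.base (constBTy c), zeroE) (.base (constBTy c), zeroE) = some ε →
      Elab Γ (.const c) (.ascr ε (.const c) (.base (constBTy c), zeroE))
        (.base (constBTy c), zeroE)
  | op : Elab Γ a a' Ta → Elab Γ b b' Tb → opCTy o Ta Tb = some T →
      Elab Γ (.op o a b) (.op o a' b') T
  | var : Γ x = some T → Elab Γ (.var x) (.var x) T
  | lam : Elab (Function.update Γ x (some T1)) e e' T2 →
      interC (.arrow T1.1 T1.2 T2.1 T2.2, zeroE) (.arrow T1.1 T1.2 T2.1 T2.2, zeroE)
        = some ε →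
      Elab Γ (.lam x T1 e)
        (.ascr ε (.lam x T1 e') (.arrow T1.1 T1.2 T2.1 T2.2, zeroE))
        (.arrow T1.1 T1.2 T2.1 T2.2, zeroE)
  | app : Elab Γ a a' Ta → Elab Γ b b' Tb →
      domC Ta = some Td → interC Tb Td = some ε2 → codC Ta = some Tc →
      Elab Γ (.app a b) (.app a' (.ascr ε2 b' Td)) Tc
  | tlam : Elab Γ e e' T →
      interC (.all r T.1 T.2, zeroE) (.all r T.1 T.2, zeroE) = some ε →
      Elab Γ (.tlam r e) (.ascr ε (.tlam r e') (.all r T.1 T.2, zeroE))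
        (.all r T.1 T.2, zeroE)
  | tapp : Elab Γ e e' T → instC T Sr = some T' →
      Elab Γ (.tapp e Sr) (.tapp e' Sr) T'
  | ascr : Elab Γ e e' T → interC T T' = some ε →
      Elab Γ (.ascr e T') (.ascr ε e' T') T'

/-- The empty type environment. -/
def emptyEnv : GTEnv := fun _ => none

/-! ## Precision on expressions -/

/-- Precision on GS source expressions (the natural syntactic lifting of type
precision to terms). -/
inductive GPrec : GExpr → GExpr → Prop
  | const : GPrec (.const c) (.const c)
  | op : GPrec a a' → GPrec b b' → GPrec (.op o a b) (.op o a' b')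
  | var : GPrec (.var x) (.var x)
  | lam : CTyPrec T T' → GPrec e e' → GPrec (.lam x T e) (.lam x T' e')
  | app : GPrec a a' → GPrec b b' → GPrec (.app a b) (.app a' b')
  | tlam : GPrec e e' → GPrec (.tlam r e) (.tlam r e')
  | tapp : GPrec e e' → precE S S' → GPrec (.tapp e S) (.tapp e' S')
  | ascr : GPrec e e' → CTyPrec T T' → GPrec (.ascr e T) (.ascr e' T')

/-- Precision on GSCheck expressions (including evidences). -/
inductive CPrec : CExpr → CExpr → Prop
  | const : CPrec (.const c) (.const c)
  | op : CPrec a a' → CPrec b b' → CPrec (.op o a b) (.op o a' b')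
  | var : CPrec (.var x) (.var x)
  | lam : CTyPrec T T' → CPrec e e' → CPrec (.lam x T e) (.lam x T' e')
  | app : CPrec a a' → CPrec b b' → CPrec (.app a b) (.app a' b')
  | tlam : CPrec e e' → CPrec (.tlam r e) (.tlam r e')
  | tapp : CPrec e e' → precE S S' → CPrec (.tapp e S) (.tapp e' S')
  | ascr : EvPrec ε ε' → CPrec e e' → CTyPrec T T' →
      CPrec (.ascr ε e T) (.ascr ε' e' T')
  | err : CPrec .err .err

end GS

/-!
Evidence only ever becomes more precise during reduction: the interior and consistent
transitivity return types at least as precise as their arguments, and precision is preserved by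
the type operations used by the reduction rules (domain, codomain, instantiation, primitive
operations, distance substitution). Hence the invariant "every ascription `ε e :: T` has
`ε.2 ⊑ T`", which elaboration establishes through the interior, is preserved by every step.
The one subtle rule is application: the argument is re-ascribed to the lambda's annotation `T₁'`
with evidence `ε₁ ∘ dom ε`, whose right component is only known to be below `dom ε.1`; so the
invariant also records that `dom ε.1 ⊑ T₁'` for every ascribed lambda `ε (λx:T₁'.e) :: T`.
-/

namespace GS

theorem SI.prec_refl (a : SI) : a.prec a := ⟨le_rfl, le_rfl⟩

theorem SI.prec.trans {a b c : SI} (hab : a.prec b) (hbc : b.prec c) : a.prec c :=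
  ⟨hbc.1.trans hab.1, hab.2.trans hbc.2⟩

theorem precE.trans {A B C : GEnv} (hAB : precE A B) (hBC : precE B C) : precE A C :=
  fun x => (hAB x).trans (hBC x)

theorem TyPrec.trans {a b c : GTy} (hab : TyPrec a b) (hbc : TyPrec b c) : TyPrec a c := by
  induction hab generalizing c with
  | base => exact hbc
  | arrow _ hS1 _ hS2 ih1 ih2 =>
    cases hbc with
    | arrow h1 hS1' h2 hS2' => exact .arrow (ih1 h1) (hS1.trans hS1') (ih2 h2) (hS2.trans hS2')
  | all _ hS ih =>
    cases hbc with
    | all h hS' => exact .all (ih h) (hS.trans hS')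

theorem CTyPrec.trans {A B C : CTy} (hAB : CTyPrec A B) (hBC : CTyPrec B C) : CTyPrec A C :=
  ⟨hAB.1.trans hBC.1, hAB.2.trans hBC.2⟩

theorem SI.prec.add {a a' b b' : SI} (ha : a.prec a') (hb : b.prec b') :
    (a.add b).prec (a'.add b') :=
  ⟨add_le_add ha.1 hb.1, add_le_add ha.2 hb.2⟩

theorem SI.prec.mul {a a' b b' : SI} (ha : a.prec a') (hb : b.prec b') :
    (a.mul b).prec (a'.mul b') :=
  ⟨mul_le_mul' ha.1 hb.1, mul_le_mul' ha.2 hb.2⟩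

theorem precE.addE {A A' B B' : GEnv} (hA : precE A A') (hB : precE B B') :
    precE (addE A B) (addE A' B') :=
  fun x => (hA x).add (hB x)

theorem precE.scaleE (g : SI) {A A' : GEnv} (hA : precE A A') :
    precE (scaleE g A) (scaleE g A') :=
  fun x => (SI.prec_refl g).mul (hA x)

theorem precE.substDVE (r : String) (Sr : GEnv) {A A' : GEnv} (hA : precE A A') :
    precE (substDVE r Sr A) (substDVE r Sr A') := by
  intro y
  refine SI.prec.add ?_ ((hA r).mul (SI.prec_refl _))
  split
  · exact SI.prec_refl _
  · exact hA y

theorem TyPrec.substT (r : String) (Sr : GEnv) {g g' : GTy} (h : TyPrec g g') :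
    TyPrec (substT r Sr g) (substT r Sr g') := by
  induction h with
  | base => exact .base
  | arrow _ hS1 _ hS2 ih1 ih2 => exact .arrow ih1 (hS1.substDVE r Sr) ih2 (hS2.substDVE r Sr)
  | @all _ _ _ _ r' h hS ih =>
    unfold GS.substT
    split
    · exact .all h hS
    · exact .all ih (hS.substDVE r Sr)

theorem CTyPrec.substCTy (r : String) (Sr : GEnv) {A B : CTy} (h : CTyPrec A B) :
    CTyPrec (substCTy r Sr A) (substCTy r Sr B) :=
  ⟨h.1.substT r Sr, h.2.substDVE r Sr⟩

theorem opCTy_mono {o : Op} {A B A' B' C C' : CTy} (hA : CTyPrec A A') (hB : CTyPrec B B')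
    (h : opCTy o A B = some C) (h' : opCTy o A' B' = some C') : CTyPrec C C' := by
  obtain ⟨ga', Sa'⟩ := A'
  obtain ⟨gb', Sb'⟩ := B'
  obtain ⟨hga, hSa⟩ := hA
  obtain ⟨hgb, hSb⟩ := hB
  revert h
  fun_cases opCTy o A B <;> intro h <;> cases h <;> cases hga <;> cases hgb <;>
    simp only [opCTy, Option.some.injEq] at h' <;> subst h'
  · exact ⟨.base, hSa.addE hSb⟩
  · exact ⟨.base, (hSa.addE hSb).scaleE _⟩
  · exact ⟨.base, (hSa.addE hSb).scaleE _⟩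

theorem exists_domC_of_prec {A B d : CTy} (h : CTyPrec A B) (hd : domC B = some d) :
    ∃ d', domC A = some d' ∧ CTyPrec d' d := by
  obtain ⟨ga, Sa⟩ := A
  obtain ⟨gb, Sb⟩ := B
  obtain ⟨hg, -⟩ := h
  cases hg with
  | arrow hg1 hS1 _ _ =>
    cases hd
    exact ⟨_, rfl, hg1, hS1⟩
  | _ => cases hd

theorem codC_mono {A B c c' : CTy} (h : CTyPrec A B) (hc : codC A = some c)
    (hc' : codC B = some c') : CTyPrec c c' := by
  obtain ⟨ga, Sa⟩ := A
  obtain ⟨gb, Sb⟩ := B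
  obtain ⟨hg, hS⟩ := h
  cases hg with
  | arrow _ _ hg2 hS2 =>
    cases hc
    cases hc'
    exact ⟨hg2, hS2.addE hS⟩
  | _ => cases hc

theorem instC_mono {A B i i' : CTy} {Sr : GEnv} (h : CTyPrec A B) (hi : instC A Sr = some i)
    (hi' : instC B Sr = some i') : CTyPrec i i' := by
  obtain ⟨ga, Sa⟩ := A
  obtain ⟨gb, Sb⟩ := B
  obtain ⟨hg, hS⟩ := h
  cases hg with
  | all hg' hS' =>
    cases hi
    cases hi'
    exact ⟨hg'.substT _ _, (hS'.substDVE _ _).addE hS⟩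
  | _ => cases hi

theorem domC_substCTy {A d : CTy} (r : String) (Sr : GEnv) (h : domC A = some d) :
    domC (substCTy r Sr A) = some (substCTy r Sr d) := by
  obtain ⟨_ | _ | _, _⟩ := A <;> cases h
  rfl

theorem interE_prec {S1 S2 l r : GEnv} (h : interE S1 S2 = some (l, r)) :
    precE l S1 ∧ precE r S2 := by
  unfold interE at h
  split_ifs at h
  cases h
  exact ⟨fun x => ⟨le_rfl, inf_le_left⟩, fun x => ⟨le_sup_right, le_rfl⟩⟩

theorem interT_prec (t1 t2 : GTy) {l r : GTy} (h : interT t1 t2 = some (l, r)) :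
    TyPrec l t1 ∧ TyPrec r t2 := by
  fun_induction interT t1 t2 generalizing l r <;>
    simp only [reduceCtorEq, Option.bind_eq_bind', Option.bind_eq_some_iff, Option.pure_def,
      Option.some.injEq, Prod.mk.injEq] at h
  case case1 =>
    obtain ⟨rfl, rfl⟩ := h
    exact ⟨.base, .base⟩
  case case3 iha ihb =>
    obtain ⟨⟨a2, a1⟩, ha, ⟨sa2, sa1⟩, hsa, ⟨b1, b2⟩, hb, ⟨sb1, sb2⟩, hsb, rfl, rfl⟩ := h
    obtain ⟨ha2, ha1⟩ := iha ha
    obtain ⟨hsa2, hsa1⟩ := interE_prec hsa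
    obtain ⟨hb1, hb2⟩ := ihb hb
    obtain ⟨hsb1, hsb2⟩ := interE_prec hsb
    exact ⟨.arrow ha1 hsa1 hb1 hsb1, .arrow ha2 hsa2 hb2 hsb2⟩
  case case4 ih =>
    obtain ⟨⟨g1, g2⟩, hg, ⟨s1, s2⟩, hs, rfl, rfl⟩ := h
    obtain ⟨hg1, hg2⟩ := ih hg
    obtain ⟨hs1, hs2⟩ := interE_prec hs
    exact ⟨.all hg1 hs1, .all hg2 hs2⟩

theorem interC_prec {T1 T2 : CTy} {ε : Ev} (h : interC T1 T2 = some ε) :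
    CTyPrec ε.1 T1 ∧ CTyPrec ε.2 T2 := by
  simp only [interC, Option.bind_eq_bind', Option.bind_eq_some_iff, Option.pure_def,
    Option.some.injEq] at h
  obtain ⟨⟨g1, g2⟩, hg, ⟨s1, s2⟩, hs, rfl⟩ := h
  obtain ⟨hg1, hg2⟩ := interT_prec _ _ hg
  obtain ⟨hs1, hs2⟩ := interE_prec hs
  exact ⟨⟨hg1, hs1⟩, ⟨hg2, hs2⟩⟩

theorem ctrE_prec {s1 s2 s3 s4 l r : GEnv} (h : ctrE s1 s2 s3 s4 = some (l, r)) :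
    precE l s1 ∧ precE r s4 := by
  unfold ctrE at h
  split_ifs at h
  cases h
  exact ⟨fun x => ⟨le_rfl, inf_le_left.trans inf_le_left⟩, fun x => ⟨le_sup_right, le_rfl⟩⟩

theorem ctrT_prec (t1 t2 t3 t4 : GTy) {l r : GTy} (h : ctrT t1 t2 t3 t4 = some (l, r)) :
    TyPrec l t1 ∧ TyPrec r t4 := by
  fun_induction ctrT t1 t2 t3 t4 generalizing l r <;>
    simp only [reduceCtorEq, Option.bind_eq_bind', Option.bind_eq_some_iff, Option.pure_def,
      Option.some.injEq, Prod.mk.injEq] at h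
  case case1 hB =>
    obtain ⟨rfl, rfl, rfl⟩ := hB
    obtain ⟨rfl, rfl⟩ := h
    exact ⟨.base, .base⟩
  case case3 iha ihb =>
    obtain ⟨⟨a4, a1⟩, ha, ⟨sa4, sa1⟩, hsa, ⟨b1, b4⟩, hb, ⟨sb1, sb4⟩, hsb, rfl, rfl⟩ := h
    obtain ⟨ha4, ha1⟩ := iha ha
    obtain ⟨hsa4, hsa1⟩ := ctrE_prec hsa
    obtain ⟨hb1, hb4⟩ := ihb hb
    obtain ⟨hsb1, hsb4⟩ := ctrE_prec hsb
    exact ⟨.arrow ha1 hsa1 hb1 hsb1, .arrow ha4 hsa4 hb4 hsb4⟩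
  case case4 hr ih =>
    obtain ⟨rfl, rfl, rfl⟩ := hr
    obtain ⟨⟨g1, g4⟩, hg, ⟨s1, s4⟩, hs, rfl, rfl⟩ := h
    obtain ⟨hg1, hg4⟩ := ih hg
    obtain ⟨hs1, hs4⟩ := ctrE_prec hs
    exact ⟨.all hg1 hs1, .all hg4 hs4⟩

theorem ctrC_prec {ε1 ε2 ε : Ev} (h : ctrC ε1 ε2 = some ε) :
    CTyPrec ε.1 ε1.1 ∧ CTyPrec ε.2 ε2.2 := by
  simp only [ctrC, Option.bind_eq_bind', Option.bind_eq_some_iff, Option.pure_def,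
    Option.some.injEq] at h
  obtain ⟨⟨g1, g4⟩, hg, ⟨s1, s4⟩, hs, rfl⟩ := h
  obtain ⟨hg1, hg4⟩ := ctrT_prec _ _ _ _ hg
  obtain ⟨hs1, hs4⟩ := ctrE_prec hs
  exact ⟨⟨hg1, hs1⟩, ⟨hg4, hs4⟩⟩

def CExpr.IsLam : CExpr → Prop
  | .lam .. => True
  | _ => False

def DomainPrec (A : CTy) : CExpr → Prop
  | .lam _ T1 _ => ∃ d, domC A = some d ∧ CTyPrec d T1
  | _ => True

/-- Lambda bodies are kept free of raw lambdas: β-reduction wraps the substituted body in a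
fresh ascription, whose evidence says nothing about the annotation of a lambda. -/
def EvidenceSound : CExpr → Prop
  | .const _ | .var _ | .err => True
  | .op _ a b | .app a b => EvidenceSound a ∧ EvidenceSound b
  | .lam _ _ e => EvidenceSound e ∧ ¬ e.IsLam
  | .tlam _ e | .tapp e _ => EvidenceSound e
  | .ascr ε e T => EvidenceSound e ∧ CTyPrec ε.2 T ∧ DomainPrec ε.1 e

theorem domainPrec_of_not_isLam {A : CTy} {e : CExpr} (he : ¬ e.IsLam) : DomainPrec A e := by
  cases e <;> simp_all [DomainPrec, CExpr.IsLam]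

theorem DomainPrec.mono {A B : CTy} {e : CExpr} (hAB : CTyPrec A B) (h : DomainPrec B e) :
    DomainPrec A e := by
  cases e with
  | lam =>
    obtain ⟨d, hd, hdT⟩ := h
    obtain ⟨d', hd', hd'd⟩ := exists_domC_of_prec hAB hd
    exact ⟨d', hd', hd'd.trans hdT⟩
  | _ => trivial

theorem not_isLam_csubst {x : String} {v e : CExpr} (hv : ¬ v.IsLam) (he : ¬ e.IsLam) :
    ¬ (csubst x v e).IsLam := by
  cases e <;> simp only [csubst] <;> try split
  all_goals simp_all [CExpr.IsLam]

theorem DomainPrec.csubst {A : CTy} {x : String} {v e : CExpr} (hv : ¬ v.IsLam)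
    (h : DomainPrec A e) : DomainPrec A (csubst x v e) := by
  cases e <;> simp only [GS.csubst] <;> try split
  all_goals first | assumption | exact domainPrec_of_not_isLam hv

theorem EvidenceSound.csubst {x : String} {v : CExpr} (hv : EvidenceSound v) (hvl : ¬ v.IsLam)
    {e : CExpr} (he : EvidenceSound e) : EvidenceSound (csubst x v e) := by
  induction e with
  | var =>
    simp only [GS.csubst]
    split
    · exact hv
    · trivial
  | lam _ _ _ ih =>
    simp only [GS.csubst]
    split
    · exact he
    · exact ⟨ih he.1, not_isLam_csubst hvl he.2⟩
  | ascr _ _ _ ih => exact ⟨ih he.1, he.2.1, he.2.2.csubst hvl⟩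
  | op _ _ _ iha ihb | app _ _ iha ihb => exact ⟨iha he.1, ihb he.2⟩
  | tlam _ _ ih | tapp _ _ ih => exact ih he
  | const | err => trivial

theorem not_isLam_dsubst {r : String} {Sr : GEnv} {e : CExpr} (he : ¬ e.IsLam) :
    ¬ (dsubst r Sr e).IsLam := by
  cases e <;> simp only [dsubst] <;> try split
  all_goals simp_all [CExpr.IsLam]

theorem DomainPrec.dsubst {A : CTy} {r : String} {Sr : GEnv} {e : CExpr}
    (h : DomainPrec A e) : DomainPrec (substCTy r Sr A) (dsubst r Sr e) := by
  cases e with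
  | lam =>
    obtain ⟨d, hd, hdT⟩ := h
    exact ⟨_, domC_substCTy r Sr hd, hdT.substCTy r Sr⟩
  | tlam =>
    simp only [GS.dsubst]
    split <;> trivial
  | _ => trivial

theorem EvidenceSound.dsubst {r : String} {Sr : GEnv} {e : CExpr} (he : EvidenceSound e) :
    EvidenceSound (dsubst r Sr e) := by
  induction e with
  | lam _ _ _ ih => exact ⟨ih he.1, not_isLam_dsubst he.2⟩
  | tlam _ _ ih =>
    simp only [GS.dsubst]
    split
    · exact he
    · exact ih he
  | ascr _ _ _ ih => exact ⟨ih he.1, he.2.1.substCTy r Sr, he.2.2.dsubst⟩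
  | op _ _ _ iha ihb | app _ _ iha ihb => exact ⟨iha he.1, ihb he.2⟩
  | tapp _ _ ih => exact ih he
  | const | var | err => trivial

theorem Elab.not_isLam {Γ : GTEnv} {g : GExpr} {e : CExpr} {T : CTy} (h : Elab Γ g e T) :
    ¬ e.IsLam := by
  cases h <;> simp [CExpr.IsLam]

theorem Elab.evidenceSound {Γ : GTEnv} {g : GExpr} {e : CExpr} {T : CTy} (h : Elab Γ g e T) :
    EvidenceSound e := by
  induction h with
  | const hi => exact ⟨trivial, (interC_prec hi).2, trivial⟩
  | tlam _ hi ihe => exact ⟨ihe, (interC_prec hi).2, trivial⟩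
  | ascr he hi ihe => exact ⟨ihe, (interC_prec hi).2, domainPrec_of_not_isLam he.not_isLam⟩
  | app _ hb _ hi _ iha ihb =>
    exact ⟨iha, ihb, (interC_prec hi).2, domainPrec_of_not_isLam hb.not_isLam⟩
  | lam he hi ihe =>
    obtain ⟨h1, h2⟩ := interC_prec hi
    exact ⟨⟨ihe, he.not_isLam⟩, h2, exists_domC_of_prec h1 rfl⟩
  | op _ _ _ iha ihb => exact ⟨iha, ihb⟩
  | var => trivial
  | tapp _ _ ih => exact ih

theorem Step.not_isLam {e e' : CExpr} (h : Step e e') : ¬ e'.IsLam := by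
  cases h <;> simp [CExpr.IsLam]

theorem evidenceSound_beta {ε ε1 εd ε' εc : Ev} {x : String} {T1 T1' T Tc : CTy}
    {u eb : CExpr} (hf : EvidenceSound (.ascr ε (.lam x T1' eb) T))
    (ha : EvidenceSound (.ascr ε1 u T1)) (hdom : domEv ε = some εd)
    (hctr : ctrC ε1 εd = some ε') (hcod : codEv ε = some εc) (hTc : codC T = some Tc) :
    EvidenceSound (.ascr εc (csubst x (.ascr ε' u T1') eb) Tc) := by
  obtain ⟨⟨hb, hbl⟩, hfT, d, hd, hdT⟩ := hf
  obtain ⟨hu, -, hul⟩ := ha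
  simp only [domEv, codEv, Option.bind_eq_bind', Option.bind_eq_some_iff, Option.pure_def,
    Option.some.injEq] at hdom hcod
  obtain ⟨d2, -, d1, hd1, rfl⟩ := hdom
  obtain ⟨c1, -, c2, hc2, rfl⟩ := hcod
  cases hd.symm.trans hd1
  obtain ⟨hε'1, hε'2⟩ := ctrC_prec hctr
  have harg : EvidenceSound (.ascr ε' u T1') := ⟨hu, hε'2.trans hdT, hul.mono hε'1⟩
  have hargl : ¬ (CExpr.ascr ε' u T1').IsLam := by simp [CExpr.IsLam]
  exact ⟨harg.csubst hargl hb, codC_mono hfT hc2 hTc,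
    domainPrec_of_not_isLam (not_isLam_csubst hargl hbl)⟩

theorem IsVal.not_isLam {v : CExpr} (hv : IsVal v) : ¬ v.IsLam := by
  cases hv
  simp [CExpr.IsLam]

theorem Step.evidenceSound {e e' : CExpr} (h : Step e e') (he : EvidenceSound e) :
    EvidenceSound e' := by
  induction h with
  | op _ hev hT =>
    obtain ⟨⟨-, h1, -⟩, ⟨-, h2, -⟩⟩ := he
    simp only [opEv, Option.bind_eq_bind', Option.bind_eq_some_iff, Option.pure_def,
      Option.some.injEq] at hev
    obtain ⟨_, -, _, hT', rfl⟩ := hev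
    exact ⟨trivial, opCTy_mono h1 h2 hT' hT, trivial⟩
  | appOk _ hdom hctr hcod hTc => exact evidenceSound_beta he.1 he.2 hdom hctr hcod hTc
  | inst hv hiε hiT =>
    simp only [EvidenceSound] at he
    obtain ⟨hv', hεT, -⟩ := he
    simp only [instEv, Option.bind_eq_bind', Option.bind_eq_some_iff, Option.pure_def,
      Option.some.injEq] at hiε
    obtain ⟨_, -, _, hi2, rfl⟩ := hiε
    exact ⟨hv'.dsubst, instC_mono hεT hi2 hiT,
      domainPrec_of_not_isLam (not_isLam_dsubst hv.not_isLam)⟩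
  | ascrOk _ hctr =>
    obtain ⟨⟨hu, -, hdom⟩, hεT, -⟩ := he
    obtain ⟨h1, h2⟩ := ctrC_prec hctr
    exact ⟨hu, h2.trans hεT, hdom.mono h1⟩
  | ascrC hs ih => exact ⟨ih he.1, he.2.1, domainPrec_of_not_isLam hs.not_isLam⟩
  | opL _ ih | appL _ ih => exact ⟨ih he.1, he.2⟩
  | opR _ _ ih | appR _ _ ih => exact ⟨he.1, ih he.2⟩
  | tappC _ ih | tlamC _ ih => exact ih he
  | _ => trivial

theorem Steps.evidenceSound {e e' : CExpr} (h : Steps e e') (he : EvidenceSound e) :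
    EvidenceSound e' := by
  induction h with
  | refl => exact he
  | tail _ hs ih => exact hs.evidenceSound ih

end GS

open GS in
/-- Adequacy of evidence as runtime sensitivity monitor: if a well-typed
closed GSCheck expression (obtained by elaboration) reduces to a value
⟨T₁,T₂⟩ u :: T, then T₂ ⊑ T; in particular the monitored sensitivity
environment (the lower bounds of the sensitivity environment of T₂) is
contained interval-wise in the sensitivity environment of T. -/
theorem evidence_monitor_adequacy
    (e : GExpr) (e0 : CExpr) (T0 : CTy) (h : Elab emptyEnv e e0 T0)
    (ε : Ev) (u : CExpr) (T : CTy)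
    (hval : IsVal (CExpr.ascr ε u T))
    (hred : Steps e0 (CExpr.ascr ε u T)) :
    CTyPrec ε.2 T ∧ ∀ r, (T.2 r).lo ≤ (ε.2.2 r).lo ∧ (ε.2.2 r).lo ≤ (T.2 r).hi := by
  have hprec : CTyPrec ε.2 T := (hred.evidenceSound h.evidenceSound).2.1
  exact ⟨hprec, fun r => ⟨(hprec.2 r).1, (ε.2.2 r).isle.trans (hprec.2 r).2⟩⟩
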